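/- arXiv:2302.09798 — 3 statements merged into one kernel-verified Lean document; each statement's English description precedes it below -/
import Mathlib

section
/- Let n ≥ 4 and let N be an integer with n + 5 < N ≤ 2n + 4. A code C ⊆ {0,1}^n satisfies |I_2(x) ∩ I_2(y)| < N for all distinct x, y ∈ C if and only if it satisfies |I_1(x) ∩ I_1(y)| < 2 for all distinct x, y ∈ C. -/
/-!
Let `D_m(x, y)` be the set of common supersequences of length `m` of binary words `x`, `y` of
length `n`. Splitting `D_{m+1}` by the first letter `b` and greedily matching `b` against the
heads of `x` and `y` gives a recursion from which one gets `|D_{n+1}(x, x)| = n + 2` and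
`|D_{n+1}(x, y)| ≤ 2` for `x ≠ y`. If moreover `|D_{n+1}(x, y)| ≤ 1`, the same recursion bounds
`|D_{n+2}(x, y)|` by `n + 5`: when the first letters differ, at most one of the two summands can
be as large as `|D_{n+2}(x, x)|`, and the other has at most `3` elements. If instead
`D_{n+1}(x, y)` contains two words `s ≠ t`, then `D_{n+2}(x, y) ⊇ D_{n+2}(s, s) ∪ D_{n+2}(t, t)`,
which has at least `(n + 3) + (n + 3) - 2` elements.
-/

open List

/-- The `t`-insertion ball of a binary word `x`: all words of length `|x| + t`
containing `x` as a (not necessarily contiguous) subsequence. -/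
def insBall (t : ℕ) (x : List Bool) : Set (List Bool) :=
  {z | z.length = x.length + t ∧ x.Sublist z}

/-- Componentwise complement of a binary word. -/
def bcompl (w : List Bool) : List Bool := w.map (fun c => !c)

/-- `wpow p i` is the concatenation of `i` copies of the word `p`. -/
def wpow (p : List Bool) (i : ℕ) : List Bool := (List.replicate i p).flatten

/-- `w` is an alternating word of length at least 1:
`w = (a ā)^i` with `i ≥ 1`, or `w = (a ā)^j a` with `j ≥ 0`. -/
def IsAlt (w : List Bool) : Prop :=
  ∃ a : Bool, (∃ i, 1 ≤ i ∧ w = wpow [a, !a] i) ∨ (∃ j, w = wpow [a, !a] j ++ [a])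

/-- Type-A confusability: `x = u w v`, `y = u w̄ v` for an alternating block `w`. -/
def TypeA (x y : List Bool) : Prop :=
  ∃ u v w : List Bool, IsAlt w ∧ x = u ++ w ++ v ∧ y = u ++ bcompl w ++ v

/-- Type-B confusability: `{x, y} = {u a ā v b w, u ā v b b̄ w}`. -/
def TypeB (x y : List Bool) : Prop :=
  ∃ (u v w : List Bool) (a b : Bool),
    ({x, y} : Set (List Bool)) =
      {u ++ [a, !a] ++ v ++ [b] ++ w, u ++ [!a] ++ v ++ [b, !b] ++ w}

/-- `p` is a period of `s` : `s_i = s_{i+p}` whenever both indices are in range. -/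
def IsPeriodOf (p : ℕ) (s : List Bool) : Prop :=
  ∀ i, i + p < s.length → s.getD i false = s.getD (i + p) false

/-- The (smallest) period of `s` is at most `ℓ`. -/
def PeriodLe (s : List Bool) (ℓ : ℕ) : Prop :=
  ∃ p, 1 ≤ p ∧ p ≤ ℓ ∧ IsPeriodOf p s

/-- `R(n, ℓ, t)`: binary words of length `n` in which every contiguous subword
of period at most `ℓ` has length at most `t`. -/
def Rset (n ℓ t : ℕ) : Set (List Bool) :=
  {x | x.length = n ∧ ∀ s : List Bool, s <:+: x → PeriodLe s ℓ → s.length ≤ t}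

/-- `Inv(x)`: the number of pairs `i < j` with `x_i > x_j` (i.e. `x_i = 1`, `x_j = 0`). -/
def invNum (x : List Bool) : ℕ :=
  ((Finset.range x.length ×ˢ Finset.range x.length).filter
    (fun q => q.1 < q.2 ∧ x.getD q.1 false = true ∧ x.getD q.2 false = false)).card

def commonSupseq (x y : List Bool) (m : ℕ) : Finset (List Bool) :=
  ((Finset.univ : Finset (List.Vector Bool m)).map
    ⟨List.Vector.toList, List.Vector.toList_injective⟩).filter (fun z => x <+ z ∧ y <+ z)

theorem mem_commonSupseq {x y z : List Bool} {m : ℕ} :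
    z ∈ commonSupseq x y m ↔ z.length = m ∧ x <+ z ∧ y <+ z := by
  simp only [commonSupseq, Finset.mem_filter, Finset.mem_map, Finset.mem_univ, true_and,
    Function.Embedding.coeFn_mk]
  constructor
  · rintro ⟨⟨v, rfl⟩, hs⟩
    exact ⟨v.toList_length, hs⟩
  · rintro ⟨hz, hs⟩
    exact ⟨⟨⟨z, hz⟩, rfl⟩, hs⟩

theorem commonSupseq_comm (x y : List Bool) (m : ℕ) :
    commonSupseq x y m = commonSupseq y x m := by
  ext z
  simp only [mem_commonSupseq, and_comm]

theorem commonSupseq_inter_commonSupseq (s t : List Bool) (m : ℕ) :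
    commonSupseq s s m ∩ commonSupseq t t m = commonSupseq s t m := by
  ext z
  simp only [Finset.mem_inter, mem_commonSupseq]
  tauto

theorem commonSupseq_subset_of_sublist {x y s : List Bool} (hx : x <+ s) (hy : y <+ s)
    (m : ℕ) : commonSupseq s s m ⊆ commonSupseq x y m := by
  intro z hz
  rw [mem_commonSupseq] at hz ⊢
  exact ⟨hz.1, hx.trans hz.2.1, hy.trans hz.2.1⟩

theorem commonSupseq_subset_self_right (u v : List Bool) (m : ℕ) :
    commonSupseq u v m ⊆ commonSupseq v v m := by
  intro z hz
  rw [mem_commonSupseq] at hz ⊢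
  exact ⟨hz.1, hz.2.2, hz.2.2⟩

theorem commonSupseq_length_right (u v : List Bool) :
    commonSupseq u v v.length = if u <+ v then {v} else ∅ := by
  ext z
  simp only [mem_commonSupseq]
  constructor
  · rintro ⟨hl, hu, hv⟩
    obtain rfl := hv.eq_of_length hl.symm
    simp [hu]
  · split_ifs with hu <;> simp_all

theorem card_commonSupseq_length_right (u v : List Bool) :
    (commonSupseq u v v.length).card = if u <+ v then 1 else 0 := by
  rw [commonSupseq_length_right]
  split_ifs <;> rfl

theorem card_commonSupseq_length_left (u v : List Bool) :
    (commonSupseq u v u.length).card = if v <+ u then 1 else 0 := by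
  rw [commonSupseq_comm, card_commonSupseq_length_right]

/-- Removes the first letter of a word if it equals `b`: the part of `x` still to be embedded
after the greedy embedding of `x` has matched the letter `b`. -/
def stripHead (b : Bool) : List Bool → List Bool
  | [] => []
  | a :: x => if a = b then x else a :: x

@[simp]
theorem stripHead_cons_self (b : Bool) (x : List Bool) : stripHead b (b :: x) = x := by
  simp [stripHead]

@[simp]
theorem stripHead_cons_not (b : Bool) (x : List Bool) : stripHead (!b) (b :: x) = b :: x := by
  simp [stripHead]

@[simp]
theorem stripHead_not_cons (b : Bool) (x : List Bool) : stripHead b ((!b) :: x) = (!b) :: x := by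
  simp [stripHead]

theorem sublist_cons_iff_stripHead (b : Bool) (x z : List Bool) :
    x <+ b :: z ↔ stripHead b x <+ z := by
  cases x with
  | nil => simp [stripHead]
  | cons a x =>
    obtain rfl | rfl := Bool.eq_or_eq_not a b
    · simp
    · simp [List.sublist_cons_iff]

theorem commonSupseq_succ (b : Bool) (x y : List Bool) (m : ℕ) :
    commonSupseq x y (m + 1) =
      (commonSupseq (stripHead b x) (stripHead b y) m).image (b :: ·) ∪
      (commonSupseq (stripHead (!b) x) (stripHead (!b) y) m).image ((!b) :: ·) := by
  ext z
  cases z with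
  | nil => simp [mem_commonSupseq]
  | cons c z =>
    obtain rfl | rfl := Bool.eq_or_eq_not c b <;>
      simp [mem_commonSupseq, sublist_cons_iff_stripHead]

theorem card_commonSupseq_succ (b : Bool) (x y : List Bool) (m : ℕ) :
    (commonSupseq x y (m + 1)).card =
      (commonSupseq (stripHead b x) (stripHead b y) m).card +
      (commonSupseq (stripHead (!b) x) (stripHead (!b) y) m).card := by
  rw [commonSupseq_succ b, Finset.card_union_of_disjoint, Finset.card_image_of_injective _ cons_injective,
    Finset.card_image_of_injective _ cons_injective]
  simp [Finset.disjoint_left]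

theorem card_commonSupseq_self (x : List Bool) :
    (commonSupseq x x (x.length + 1)).card = x.length + 2 := by
  induction x with
  | nil => decide
  | cons a x ih =>
    rw [length_cons, card_commonSupseq_succ a, stripHead_cons_self, stripHead_cons_not,
      ih, ← length_cons, card_commonSupseq_length_right, if_pos (Sublist.refl _), length_cons]

theorem card_commonSupseq_length_right_le_one (u v : List Bool) :
    (commonSupseq u v v.length).card ≤ 1 := by
  rw [card_commonSupseq_length_right]
  split_ifs <;> simp

theorem card_commonSupseq_length_left_le_one (u v : List Bool) :
    (commonSupseq u v u.length).card ≤ 1 := by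
  rw [commonSupseq_comm]
  exact card_commonSupseq_length_right_le_one v u

theorem card_commonSupseq_le_two {x y : List Bool} (hxy : x ≠ y) (hl : x.length = y.length) :
    (commonSupseq x y (x.length + 1)).card ≤ 2 := by
  induction x generalizing y with
  | nil => exact absurd (length_eq_zero_iff.mp hl.symm).symm hxy
  | cons a x ih =>
    obtain _ | ⟨b, y⟩ := y
    · simp at hl
    rw [length_cons, card_commonSupseq_succ a]
    obtain rfl | rfl := Bool.eq_or_eq_not b a
    · have hnot : ¬ b :: x <+ b :: y := fun h => hxy (h.eq_of_length hl)
      have h₀ : (commonSupseq (b :: x) (b :: y) (x.length + 1)).card = 0 := by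
        rw [show x.length + 1 = (b :: y).length from hl, card_commonSupseq_length_right,
          if_neg hnot]
      rw [stripHead_cons_self, stripHead_cons_self, stripHead_cons_not, stripHead_cons_not, h₀]
      exact ih (fun h => hxy (h ▸ rfl)) (by simpa using hl)
    · have h₁ := card_commonSupseq_length_right_le_one x ((!a) :: y)
      have h₂ := card_commonSupseq_length_left_le_one (a :: x) y
      rw [← show x.length + 1 = ((!a) :: y).length from hl] at h₁
      rw [length_cons] at h₂
      rw [stripHead_cons_self, stripHead_not_cons, stripHead_cons_not, stripHead_cons_self]
      omega

theorem card_commonSupseq_le_three {u v : List Bool} (hl : u.length + 1 = v.length)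
    (hs : ¬ u <+ v) : (commonSupseq u v (v.length + 1)).card ≤ 3 := by
  induction u generalizing v with
  | nil => exact absurd (nil_sublist v) hs
  | cons a u ih =>
    obtain _ | ⟨b, v⟩ := v
    · simp at hl
    rw [length_cons, card_commonSupseq_succ a]
    obtain rfl | rfl := Bool.eq_or_eq_not b a
    · have h₀ : (commonSupseq (b :: u) (b :: v) (v.length + 1)).card = 0 := by
        rw [show v.length + 1 = (b :: v).length from rfl, card_commonSupseq_length_right,
          if_neg hs]
      rw [stripHead_cons_self, stripHead_cons_self, stripHead_cons_not, stripHead_cons_not, h₀]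
      exact ih (by simpa using hl) (fun h => hs (h.cons_cons b))
    · have h₁ := card_commonSupseq_length_right_le_one u ((!a) :: v)
      have h₂ : (commonSupseq (a :: u) v (v.length + 1)).card ≤ 2 := by
        have hne : a :: u ≠ v := by
          rintro rfl
          exact hs (sublist_cons_self _ _)
        have h := card_commonSupseq_le_two hne (by simpa using hl)
        rwa [hl] at h
      rw [length_cons] at h₁
      rw [stripHead_cons_self, stripHead_not_cons, stripHead_cons_not, stripHead_cons_self]
      omega

theorem card_commonSupseq_length_succ_le {u v : List Bool} (hl : u.length + 1 = v.length) :
    (commonSupseq u v (v.length + 1)).card ≤ if u <+ v then v.length + 2 else 3 := by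
  split_ifs with hs
  · calc (commonSupseq u v (v.length + 1)).card
        ≤ (commonSupseq v v (v.length + 1)).card :=
          Finset.card_le_card (commonSupseq_subset_self_right u v _)
      _ = v.length + 2 := card_commonSupseq_self v
  · exact card_commonSupseq_le_three hl hs

theorem card_commonSupseq_length_add_two_le {x y : List Bool} (hxy : x ≠ y)
    (hl : x.length = y.length) (h₁ : (commonSupseq x y (x.length + 1)).card ≤ 1) :
    (commonSupseq x y (x.length + 2)).card ≤ x.length + 5 := by
  induction x generalizing y with
  | nil => exact absurd (length_eq_zero_iff.mp hl.symm).symm hxy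
  | cons a x ih =>
    obtain _ | ⟨b, y⟩ := y
    · simp at hl
    have h₂ : (commonSupseq (a :: x) (b :: y) (x.length + 2)).card ≤ 1 := h₁
    rw [length_cons, card_commonSupseq_succ a] at h₁
    rw [show (a :: x).length + 2 = x.length + 2 + 1 by simp, card_commonSupseq_succ a]
    obtain rfl | rfl := Bool.eq_or_eq_not b a
    · simp only [stripHead_cons_self, stripHead_cons_not, length_cons] at h₁ ⊢
      have hx : (commonSupseq x y (x.length + 2)).card ≤ x.length + 5 :=
        ih (fun h => hxy (h ▸ rfl)) (by simpa using hl) (by omega)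
      omega
    · simp only [stripHead_cons_self, stripHead_not_cons, stripHead_cons_not] at h₁ ⊢
      have hy : ((!a) :: y).length = x.length + 1 := hl.symm
      have e₁ : (commonSupseq x ((!a) :: y) (x.length + 1)).card =
          if x <+ (!a) :: y then 1 else 0 := by
        rw [← hy, card_commonSupseq_length_right]
      have e₂ : (commonSupseq (a :: x) y (x.length + 1)).card = if y <+ a :: x then 1 else 0 :=
        card_commonSupseq_length_left _ _
      rw [e₁, e₂] at h₁
      have hb₁ : (commonSupseq x ((!a) :: y) (x.length + 2)).card ≤
          if x <+ (!a) :: y then x.length + 3 else 3 := by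
        simpa [hy] using card_commonSupseq_length_succ_le hy.symm
      have hb₂ : (commonSupseq (a :: x) y (x.length + 2)).card ≤
          if y <+ a :: x then x.length + 3 else 3 := by
        rw [commonSupseq_comm]
        simpa using card_commonSupseq_length_succ_le (u := y) (v := a :: x) (by simpa using hy)
      split_ifs at h₁ hb₁ hb₂ <;> omega

theorem two_mul_add_four_le_card_commonSupseq {x y : List Bool} {n : ℕ}
    (h₂ : 2 ≤ (commonSupseq x y (n + 1)).card) : 2 * n + 4 ≤ (commonSupseq x y (n + 2)).card := by
  obtain ⟨s, hs, t, ht, hst⟩ := Finset.one_lt_card.mp h₂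
  rw [mem_commonSupseq] at hs ht
  have hsub : commonSupseq s s (n + 2) ∪ commonSupseq t t (n + 2) ⊆ commonSupseq x y (n + 2) :=
    Finset.union_subset (commonSupseq_subset_of_sublist hs.2.1 hs.2.2 _)
      (commonSupseq_subset_of_sublist ht.2.1 ht.2.2 _)
  have hs₁ : (commonSupseq s s (n + 2)).card = n + 3 := by
    simpa [hs.1] using card_commonSupseq_self s
  have ht₁ : (commonSupseq t t (n + 2)).card = n + 3 := by
    simpa [ht.1] using card_commonSupseq_self t
  have hst₁ : (commonSupseq s t (n + 2)).card ≤ 2 := by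
    simpa [hs.1] using card_commonSupseq_le_two hst (hs.1.trans ht.1.symm)
  have hunion := Finset.card_union_add_card_inter (commonSupseq s s (n + 2))
    (commonSupseq t t (n + 2))
  rw [commonSupseq_inter_commonSupseq] at hunion
  have := Finset.card_le_card hsub
  omega

theorem insBall_inter_insBall {x y : List Bool} (t : ℕ) (hl : x.length = y.length) :
    insBall t x ∩ insBall t y = ↑(commonSupseq x y (x.length + t)) := by
  ext z
  simp only [insBall, Set.mem_inter_iff, Set.mem_ofPred_eq, Finset.mem_coe, mem_commonSupseq, hl]
  tauto

theorem ncard_insBall_two_lt_iff {x y : List Bool} {N : ℕ} (hxy : x ≠ y)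
    (hl : x.length = y.length) (hN₁ : x.length + 5 < N) (hN₂ : N ≤ 2 * x.length + 4) :
    (insBall 2 x ∩ insBall 2 y).ncard < N ↔ (insBall 1 x ∩ insBall 1 y).ncard < 2 := by
  rw [insBall_inter_insBall 2 hl, insBall_inter_insBall 1 hl, Set.ncard_coe_finset,
    Set.ncard_coe_finset]
  constructor
  · intro h
    by_contra! h₂
    have := two_mul_add_four_le_card_commonSupseq h₂
    omega
  · intro h
    have := card_commonSupseq_length_add_two_le hxy hl (by omega)
    omega

theorem stmt7_general (n N : ℕ) (hN1 : n + 5 < N) (hN2 : N ≤ 2 * n + 4)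
    (C : Set (List Bool)) (hC : ∀ x ∈ C, x.length = n) :
    (∀ x ∈ C, ∀ y ∈ C, x ≠ y → (insBall 2 x ∩ insBall 2 y).ncard < N) ↔
    (∀ x ∈ C, ∀ y ∈ C, x ≠ y → (insBall 1 x ∩ insBall 1 y).ncard < 2) := by
  refine forall₂_congr fun x hx => forall₂_congr fun y hy => imp_congr_right fun hxy => ?_
  have hxn := hC x hx
  exact ncard_insBall_two_lt_iff hxy (hxn.trans (hC y hy).symm) (hxn ▸ hN1) (hxn ▸ hN2)

theorem stmt7 (n N : ℕ) (hn : 4 ≤ n) (hN1 : n + 5 < N) (hN2 : N ≤ 2 * n + 4)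
    (C : Set (List Bool)) (hC : ∀ x ∈ C, x.length = n) :
    (∀ x ∈ C, ∀ y ∈ C, x ≠ y → (insBall 2 x ∩ insBall 2 y).ncard < N) ↔
    (∀ x ∈ C, ∀ y ∈ C, x ≠ y → (insBall 1 x ∩ insBall 1 y).ncard < 2) :=
  stmt7_general n N hN1 hN2 C hC
end

section
/- Let u, v, w ∈ {0,1}* and a, b ∈ {0,1}, and set x = u a ā v b w, y = u ā v b b̄ w, and z = u a ā v b b̄ w. If x and y are not Type-A confusable, then I_2(x) ∩ I_2(y) = I_1(z) ∪ { u s w : s ∈ (I_2(a ā v b) ∩ I_2(ā v b b̄)) \ I_1(a ā v b b̄) }, and this union is disjoint. -/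
open List

/-!
Write `X = a ā v b`, `Y = ā v b b̄`, `Z = a ā v b b̄`. A common supersequence `c` of `x = u X w`
and `y = u Y w` either matches `u` and `w` at its two ends, or one of its letters can be deleted
without losing `x` or `y`. For `|c| = |x| + 2` the first case gives `c = u s w` with `X, Y`
subsequences of `s`. In the second case the shorter supersequence has length `|x| + 1`; as
`x ≠ y` it cannot lose a further letter, so it is `u e w` with `|e| = |X| + 1`. Comparing the
first letter of `e` with `a` shows `e = Z`, unless `e = ā a ā v b` contains `Y`; that forces
`v b = a v̄`, i.e. `X` is alternating and `Y = X̄`, so `x` and `y` would be Type-A confusable.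
-/

namespace List

variable {α : Type*}

theorem prefix_split_or_deletion {p x y c : List α} (hx : p ++ x <+ c) (hy : p ++ y <+ c) :
    (∃ c', c = p ++ c' ∧ x <+ c' ∧ y <+ c') ∨
      ∃ e, e.length + 1 = c.length ∧ e <+ c ∧ p ++ x <+ e ∧ p ++ y <+ e := by
  induction p generalizing c with
  | nil => exact Or.inl ⟨c, rfl, hx, hy⟩
  | cons d p ih =>
    obtain _ | ⟨c₀, c⟩ := c
    · simp at hx
    by_cases hd : c₀ = d
    · subst hd
      rcases ih (cons_sublist_cons.mp hx) (cons_sublist_cons.mp hy) with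
        ⟨c', rfl, hxc, hyc⟩ | ⟨e, he, hec, hxe, hye⟩
      · exact Or.inl ⟨c', rfl, hxc, hyc⟩
      · exact Or.inr ⟨c₀ :: e, by simp [he], hec.cons_cons _, hxe.cons_cons _, hye.cons_cons _⟩
    · exact Or.inr ⟨c, rfl, sublist_cons_self _ _, hx.of_cons_of_ne (Ne.symm hd),
        hy.of_cons_of_ne (Ne.symm hd)⟩

theorem suffix_split_or_deletion {q x y c : List α} (hx : x ++ q <+ c) (hy : y ++ q <+ c) :
    (∃ c', c = c' ++ q ∧ x <+ c' ∧ y <+ c') ∨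
      ∃ e, e.length + 1 = c.length ∧ e <+ c ∧ x ++ q <+ e ∧ y ++ q <+ e := by
  rcases prefix_split_or_deletion (by simpa using hx.reverse) (by simpa using hy.reverse) with
    ⟨c', hc, hxc, hyc⟩ | ⟨e, he, hec, hxe, hye⟩
  · refine Or.inl ⟨c'.reverse, ?_, by simpa using hxc.reverse, by simpa using hyc.reverse⟩
    simpa using congrArg reverse hc
  · exact Or.inr ⟨e.reverse, by simpa using he, by simpa using hec.reverse,
      by simpa using hxe.reverse, by simpa using hye.reverse⟩

theorem frame_split_or_deletion {u w x y c : List α} (hx : u ++ x ++ w <+ c)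
    (hy : u ++ y ++ w <+ c) :
    (∃ s, c = u ++ s ++ w ∧ x <+ s ∧ y <+ s) ∨
      ∃ e, e.length + 1 = c.length ∧ e <+ c ∧ u ++ x ++ w <+ e ∧ u ++ y ++ w <+ e := by
  rw [append_assoc] at hx hy
  rcases prefix_split_or_deletion hx hy with ⟨c', rfl, hxc, hyc⟩ | hdel
  · rcases suffix_split_or_deletion hxc hyc with ⟨s, rfl, hxs, hys⟩ | ⟨e, he, hec, hxe, hye⟩
    · exact Or.inl ⟨s, by simp, hxs, hys⟩
    · refine Or.inr ⟨u ++ e, by simp [← he]; omega, hec.append_left u, ?_, ?_⟩ <;>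
        simpa using (append_sublist_append_left u).mpr ‹_›
  · simpa using Or.inr hdel

theorem frame_of_sublist_length_succ {u w x y e : List α} (hne : x ≠ y)
    (hlen : x.length = y.length) (hx : u ++ x ++ w <+ e) (hy : u ++ y ++ w <+ e)
    (he : e.length = (u ++ x ++ w).length + 1) :
    ∃ s, e = u ++ s ++ w ∧ x <+ s ∧ y <+ s := by
  refine (frame_split_or_deletion hx hy).resolve_right ?_
  rintro ⟨d, hd, -, hxd, hyd⟩
  have hxd := hxd.eq_of_length (by omega)
  have hyd := hyd.eq_of_length (by simp at hd he ⊢; omega)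
  exact hne (by simpa using hxd.trans hyd.symm)

end List

theorem mem_insBall_frame_iff (t : ℕ) (u s x w : List Bool) :
    u ++ s ++ w ∈ insBall t (u ++ x ++ w) ↔ s ∈ insBall t x := by
  simp only [insBall, Set.mem_ofPred_eq, length_append, append_sublist_append_right,
    append_sublist_append_left]
  constructor <;> rintro ⟨hl, hs⟩ <;> exact ⟨by omega, hs⟩

theorem insBall_subset_of_sublist {x z : List Bool} {k t : ℕ} (h : x <+ z)
    (hk : z.length = x.length + k) : insBall t z ⊆ insBall (k + t) x :=
  fun _ ⟨hl, hz⟩ => ⟨by omega, h.trans hz⟩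

theorem TypeA.frame {x y : List Bool} (u w : List Bool) (h : TypeA x y) :
    TypeA (u ++ x ++ w) (u ++ y ++ w) := by
  obtain ⟨u', v', w', hw', rfl, rfl⟩ := h
  exact ⟨u ++ u', v' ++ w, w', hw', by simp, by simp⟩

def altWord : Bool → ℕ → List Bool
  | _, 0 => []
  | a, n + 1 => a :: altWord (!a) n

theorem altWord_add_two (a : Bool) (n : ℕ) : altWord a (n + 2) = a :: (!a) :: altWord a n := by
  simp [altWord]

theorem altWord_two_mul (a : Bool) (i : ℕ) : altWord a (2 * i) = wpow [a, !a] i := by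
  induction i with
  | zero => rfl
  | succ i ih => simp [Nat.mul_succ, altWord_add_two, ih, wpow, replicate_succ]

theorem altWord_two_mul_add_one (a : Bool) (i : ℕ) :
    altWord a (2 * i + 1) = wpow [a, !a] i ++ [a] := by
  induction i with
  | zero => rfl
  | succ i ih =>
    rw [show 2 * (i + 1) + 1 = 2 * i + 1 + 2 by ring, altWord_add_two, ih]
    simp [wpow, replicate_succ]

theorem isAlt_altWord (a : Bool) (n : ℕ) : IsAlt (altWord a (n + 1)) := by
  obtain ⟨i, hi | hi⟩ := Nat.even_or_odd' (n + 1) <;> rw [hi]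
  · exact ⟨a, Or.inl ⟨i, by omega, altWord_two_mul a i⟩⟩
  · exact ⟨a, Or.inr ⟨i, altWord_two_mul_add_one a i⟩⟩

theorem eq_altWord_of_cons_bcompl {a b : Bool} {v : List Bool} (h : a :: bcompl v = v ++ [b]) :
    v ++ [b] = altWord a (v.length + 1) := by
  induction v generalizing a with
  | nil => simp_all [altWord, bcompl]
  | cons c v ih =>
    simp only [bcompl, map_cons, cons_append, cons.injEq] at h
    obtain ⟨rfl, h⟩ := h
    simp [altWord, ← ih h]

theorem cons_bcompl_eq_of_sublist {a b : Bool} {v : List Bool}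
    (h : v ++ [b, !b] <+ a :: (!a) :: (v ++ [b])) : a :: bcompl v = v ++ [b] := by
  induction v generalizing a with
  | nil => revert h; cases a <;> cases b <;> decide
  | cons c v ih =>
    by_cases hc : c = a
    · subst hc
      have h' : v ++ [b, !b] <+ (!c) :: (!!c) :: (v ++ [b]) := by
        simpa using cons_sublist_cons.mp h
      simp [bcompl, ← ih h']
    · have hc : c = !a := by cases a <;> cases c <;> simp_all
      subst hc
      have h' : v ++ [b, !b] <+ ((!a) :: v) ++ [b] :=
        cons_sublist_cons.mp ((h.of_cons_of_ne (by simp)).trans (by simp))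
      simpa using congrArg reverse (h'.eq_of_length (by simp))

theorem typeA_of_cons_bcompl_eq {a b : Bool} {v : List Bool} (h : a :: bcompl v = v ++ [b]) :
    TypeA ([a, !a] ++ v ++ [b]) ([!a] ++ v ++ [b, !b]) := by
  refine ⟨[], [], [a, !a] ++ v ++ [b], ?_, by simp, ?_⟩
  · have := isAlt_altWord a (v.length + 2)
    simpa [altWord, eq_altWord_of_cons_bcompl h] using this
  · have hX : bcompl ([a, !a] ++ v ++ [b]) = (!a) :: (a :: bcompl v) ++ [!b] := by
      simp [bcompl]
    rw [hX, h]
    simp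

theorem eq_or_typeA_of_common_supersequence {a b : Bool} {v e : List Bool}
    (hX : [a, !a] ++ v ++ [b] <+ e) (hY : [!a] ++ v ++ [b, !b] <+ e)
    (he : e.length = v.length + 4) :
    e = [a, !a] ++ v ++ [b, !b] ∨ TypeA ([a, !a] ++ v ++ [b]) ([!a] ++ v ++ [b, !b]) := by
  obtain _ | ⟨e₀, e⟩ := e
  · simp at he
  by_cases h₀ : e₀ = a
  · subst h₀
    have hY' : (!e₀) :: (v ++ [b, !b]) <+ e :=
      (show (!e₀) :: (v ++ [b, !b]) <+ e₀ :: e by simpa using hY).of_cons_of_ne (by simp)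
    left
    simp [← hY'.eq_of_length (by simp at he ⊢; omega)]
  · obtain rfl : e₀ = !a := by cases a <;> cases e₀ <;> simp_all
    have hX' : a :: (!a) :: (v ++ [b]) <+ e :=
      (show a :: (!a) :: (v ++ [b]) <+ (!a) :: e by simpa using hX).of_cons_of_ne (by simp)
    obtain rfl := hX'.eq_of_length (by simp at he ⊢; omega)
    have hY' : (!a) :: (v ++ [b, !b]) <+ (!a) :: a :: (!a) :: (v ++ [b]) := by simpa using hY
    exact Or.inr (typeA_of_cons_bcompl_eq (cons_bcompl_eq_of_sublist (cons_sublist_cons.mp hY')))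

theorem mem_insBall_one_or_frame_of_mem_insBall_two {u v w c : List Bool} {a b : Bool}
    (hA : ¬ TypeA (u ++ ([a, !a] ++ v ++ [b]) ++ w) (u ++ ([!a] ++ v ++ [b, !b]) ++ w))
    (hx : c ∈ insBall 2 (u ++ ([a, !a] ++ v ++ [b]) ++ w))
    (hy : c ∈ insBall 2 (u ++ ([!a] ++ v ++ [b, !b]) ++ w)) :
    c ∈ insBall 1 (u ++ ([a, !a] ++ v ++ [b, !b]) ++ w) ∨ ∃ s, c = u ++ s ++ w := by
  rcases frame_split_or_deletion hx.2 hy.2 with ⟨s, rfl, -, -⟩ | ⟨e, he, hec, hxe, hye⟩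
  · exact Or.inr ⟨s, rfl⟩
  have hne : [a, !a] ++ v ++ [b] ≠ [!a] ++ v ++ [b, !b] := by cases a <;> simp
  obtain ⟨s, rfl, hXs, hYs⟩ :=
    frame_of_sublist_length_succ hne (by simp) hxe hye (by rw [hx.1] at he; omega)
  have hc := hx.1
  simp only [length_append, length_cons, length_nil] at hc he
  rcases eq_or_typeA_of_common_supersequence hXs hYs (by omega) with rfl | hXY
  · exact Or.inl ⟨by simp; omega, hec⟩
  · exact absurd (hXY.frame u w) hA

theorem stmt9 (u v w : List Bool) (a b : Bool) (x y z : List Bool)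
    (hx : x = u ++ [a, !a] ++ v ++ [b] ++ w)
    (hy : y = u ++ [!a] ++ v ++ [b, !b] ++ w)
    (hz : z = u ++ [a, !a] ++ v ++ [b, !b] ++ w)
    (hA : ¬ TypeA x y) :
    insBall 2 x ∩ insBall 2 y =
      insBall 1 z ∪
        (fun s => u ++ s ++ w) ''
          ((insBall 2 ([a, !a] ++ v ++ [b]) ∩ insBall 2 ([!a] ++ v ++ [b, !b])) \
            insBall 1 ([a, !a] ++ v ++ [b, !b])) ∧
    Disjoint (insBall 1 z)
      ((fun s => u ++ s ++ w) ''
        ((insBall 2 ([a, !a] ++ v ++ [b]) ∩ insBall 2 ([!a] ++ v ++ [b, !b])) \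
          insBall 1 ([a, !a] ++ v ++ [b, !b]))) := by
  obtain rfl : x = u ++ ([a, !a] ++ v ++ [b]) ++ w := by simp [hx]
  obtain rfl : y = u ++ ([!a] ++ v ++ [b, !b]) ++ w := by simp [hy]
  obtain rfl : z = u ++ ([a, !a] ++ v ++ [b, !b]) ++ w := by simp [hz]
  refine ⟨Set.Subset.antisymm ?_ ?_, Set.disjoint_left.mpr ?_⟩
  · rintro c ⟨hcx, hcy⟩
    rcases mem_insBall_one_or_frame_of_mem_insBall_two hA hcx hcy with hcz | ⟨s, rfl⟩
    · exact Or.inl hcz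
    by_cases hs : s ∈ insBall 1 ([a, !a] ++ v ++ [b, !b])
    · exact Or.inl ((mem_insBall_frame_iff ..).mpr hs)
    · exact Or.inr ⟨s, ⟨⟨(mem_insBall_frame_iff ..).mp hcx, (mem_insBall_frame_iff ..).mp hcy⟩,
        hs⟩, rfl⟩
  · rintro c (hcz | ⟨s, ⟨⟨hsx, hsy⟩, -⟩, rfl⟩)
    · exact ⟨insBall_subset_of_sublist (by simp) (by simp; omega) hcz,
        insBall_subset_of_sublist (by simp) (by simp; omega) hcz⟩
    · exact ⟨(mem_insBall_frame_iff ..).mpr hsx, (mem_insBall_frame_iff ..).mpr hsy⟩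
  · rintro c hcz ⟨s, ⟨-, hs⟩, rfl⟩
    exact hs ((mem_insBall_frame_iff ..).mp hcz)
end

section
/- Let a, b ∈ {0,1} and d, e ∈ {0,1}* with |d| = |e|. Suppose d b and ā e are Type-A confusable, witnessed by a decomposition d b = α w β and ā e = α w̄ β with w an alternating sequence of length at least 1, and suppose in addition that a d and e b̄ are Type-A confusable. Then there exist p₁, p₂, p₁′, p₂′ ∈ {0,1}* such that α = p₁′ p₂′ and β = p₁ p₂, where each of p₁, p₂, p₁′, p₂′ has period at most 2. -/
open List

/-!
Write `x = d b`, `y = ā e`, `x' = a d`, `y' = e b̄`, so that `x k = x' (k+1)` and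
`y (k+2) = y' (k+1)`. Let `x' = u w' v`, `y' = u w̄' v` with `w'` alternating. If position `k+1`
lies outside `w'`, then `x k = x' (k+1) = y' (k+1) = y (k+2)`; if `k+1` and `k+3` both lie inside
`w'`, then `x k = x' (k+1) = x' (k+3) = x (k+2)`. Hence `x k = x (k+2)` whenever `x` and `y`
agree at `k+2` (as they do on `α` and `β`), except for the windows `[k, k+2]` straddling the end
of `w'`. Cutting `α` and `β` there leaves pieces of period at most 2.
-/

theorem length_bcompl (w : List Bool) : (bcompl w).length = w.length :=
  List.length_map _

theorem getD_append_append_of_lt {u w v : List Bool} {j : ℕ} (hj : j < u.length) :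
    (u ++ w ++ v).getD j false = u.getD j false := by
  grind

theorem getD_append_append_length_add (u w v : List Bool) (i : ℕ) :
    (u ++ w ++ v).getD (u.length + w.length + i) false = v.getD i false := by
  grind

theorem getD_append_append_congr {u w w' v : List Bool} (hlen : w.length = w'.length) {j : ℕ}
    (hj : j < u.length ∨ u.length + w.length ≤ j) :
    (u ++ w ++ v).getD j false = (u ++ w' ++ v).getD j false := by
  rcases hj with hj | hj
  · rw [getD_append_append_of_lt hj, getD_append_append_of_lt hj]
  · obtain ⟨i, rfl⟩ := Nat.exists_eq_add_of_le hj
    rw [getD_append_append_length_add, hlen, getD_append_append_length_add]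

theorem IsPeriodOf.getD_append_append {p : ℕ} {u w v : List Bool} (h : IsPeriodOf p w) {j : ℕ}
    (hj : u.length ≤ j) (hjp : j + p < u.length + w.length) :
    (u ++ w ++ v).getD j false = (u ++ w ++ v).getD (j + p) false := by
  have := h (j - u.length) (by omega)
  grind

theorem length_wpow (q : List Bool) (i : ℕ) : (wpow q i).length = q.length * i := by
  simp [wpow, Nat.mul_comm]

theorem getD_wpow (q : List Bool) (i : ℕ) {k : ℕ} (hk : k < q.length * i) :
    (wpow q i).getD k false = q.getD (k % q.length) false := by
  induction i generalizing k with
  | zero => simp at hk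
  | succ i ih =>
    rw [wpow, List.replicate_succ, List.flatten_cons, ← wpow]
    by_cases hkq : k < q.length
    · rw [List.getD_append _ _ _ _ hkq, Nat.mod_eq_of_lt hkq]
    · rw [Nat.mul_add_one] at hk
      rw [List.getD_append_right _ _ _ _ (by omega), ih (by omega),
        ← Nat.mod_eq_sub_mod (by omega)]

theorem isPeriodOf_of_prefix_wpow {s q : List Bool} {i : ℕ} (h : s <+: wpow q i) :
    IsPeriodOf q.length s := by
  obtain ⟨t, ht⟩ := h
  have hlen : s.length ≤ q.length * i := by
    rw [← length_wpow, ← ht, List.length_append]; omega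
  intro k hk
  have hs : ∀ j < s.length, s.getD j false = (wpow q i).getD j false := fun j hj => by
    rw [← ht, List.getD_append _ _ _ _ hj]
  rw [hs k (by omega), hs (k + q.length) hk, getD_wpow q i (by omega), getD_wpow q i (by omega),
    Nat.add_mod_right]

theorem IsAlt.isPeriodOf_two {w : List Bool} (hw : IsAlt w) : IsPeriodOf 2 w := by
  obtain ⟨a, ⟨i, -, rfl⟩ | ⟨j, rfl⟩⟩ := hw
  · exact isPeriodOf_of_prefix_wpow (q := [a, !a]) (List.prefix_refl _)
  · refine isPeriodOf_of_prefix_wpow (q := [a, !a]) (i := j + 1) ?_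
    simp [wpow, List.replicate_succ']

theorem isPeriodOf_take {p N : ℕ} {t : List Bool}
    (h : ∀ i, i + p < N → i + p < t.length → t.getD i false = t.getD (i + p) false) :
    IsPeriodOf p (t.take N) := by
  intro i hi
  rw [List.length_take] at hi
  have := h i (by omega) (by omega)
  grind

theorem isPeriodOf_drop {p N : ℕ} {t : List Bool}
    (h : ∀ i, N ≤ i → i + p < t.length → t.getD i false = t.getD (i + p) false) :
    IsPeriodOf p (t.drop N) := by
  intro i hi
  rw [List.length_drop] at hi
  have := h (N + i) (by omega) (by omega)
  grind

theorem exists_append_periodLe {p : ℕ} (hp : 0 < p) (t : List Bool) (N : ℕ)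
    (h : ∀ i, i + p < t.length → (i + p < N ∨ N ≤ i) → t.getD i false = t.getD (i + p) false) :
    ∃ q r, t = q ++ r ∧ PeriodLe q p ∧ PeriodLe r p :=
  ⟨t.take N, t.drop N, (List.take_append_drop N t).symm,
    ⟨p, hp, le_rfl, isPeriodOf_take fun i hN ht => h i ht (.inl hN)⟩,
    ⟨p, hp, le_rfl, isPeriodOf_drop fun i hN ht => h i ht (.inr hN)⟩⟩

theorem getD_eq_getD_add_two_of_typeA {a b : Bool} {d e u v w : List Bool} (hw : IsAlt w)
    (hx : [a] ++ d = u ++ w ++ v) (hy : e ++ [!b] = u ++ bcompl w ++ v) {k : ℕ}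
    (hk : k + 2 ≤ d.length)
    (hcut : k + 3 < u.length + w.length ∨ u.length + w.length ≤ k + 1)
    (hxy : (d ++ [b]).getD (k + 2) false = ([!a] ++ e).getD (k + 2) false) :
    (d ++ [b]).getD k false = (d ++ [b]).getD (k + 2) false := by
  have hlen_x := congrArg List.length hx
  have hlen_y := congrArg List.length hy
  simp only [List.length_append, List.length_singleton, length_bcompl] at hlen_x hlen_y
  have hx_shift : ∀ j < d.length, (d ++ [b]).getD j false = ([a] ++ d).getD (j + 1) false :=
    fun j hj => by grind
  have hy_shift : ([!a] ++ e).getD (k + 2) false = (e ++ [!b]).getD (k + 1) false := by grind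
  by_cases hblock : u.length ≤ k + 1 ∧ k + 1 < u.length + w.length
  · rw [hx_shift k (by omega), hx_shift (k + 2) (by omega), hx,
      hw.isPeriodOf_two.getD_append_append hblock.1 (by omega)]
  · rw [hxy, hx_shift k (by omega), hy_shift, hx, hy,
      getD_append_append_congr (length_bcompl w).symm (by omega)]

theorem stmt15_general (a b : Bool) (d e : List Bool) (α β w : List Bool)
    (h1 : d ++ [b] = α ++ w ++ β) (h2 : [!a] ++ e = α ++ bcompl w ++ β)
    (hA : TypeA ([a] ++ d) (e ++ [!b])) :
    ∃ p1 p2 p1' p2' : List Bool,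
      α = p1' ++ p2' ∧ β = p1 ++ p2 ∧
      PeriodLe p1 2 ∧ PeriodLe p2 2 ∧ PeriodLe p1' 2 ∧ PeriodLe p2' 2 := by
  obtain ⟨u, v, w', hw', hx, hy⟩ := hA
  have hlen := congrArg List.length h1
  simp only [List.length_append, List.length_singleton] at hlen
  have hxy : ∀ j, (j < α.length ∨ α.length + w.length ≤ j) →
      (d ++ [b]).getD j false = ([!a] ++ e).getD j false := fun j hj => by
    rw [h1, h2]; exact getD_append_append_congr (length_bcompl w).symm hj
  set E := u.length + w'.length
  obtain ⟨p1', p2', hα, hp1', hp2'⟩ := exists_append_periodLe two_pos α (E - 1)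
    fun i hi hcut => by
      have := getD_eq_getD_add_two_of_typeA hw' hx hy (k := i) (by omega) (by omega)
        (hxy _ (.inl hi))
      rwa [h1, getD_append_append_of_lt (by omega), getD_append_append_of_lt hi] at this
  obtain ⟨p1, p2, hβ, hp1, hp2⟩ := exists_append_periodLe two_pos β
    (E - 1 - (α.length + w.length)) fun i hi hcut => by
      have := getD_eq_getD_add_two_of_typeA hw' hx hy (k := α.length + w.length + i)
        (by omega) (by omega) (hxy _ (.inr (by omega)))
      rwa [h1, getD_append_append_length_add, Nat.add_assoc _ i,
        getD_append_append_length_add] at this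
  exact ⟨p1, p2, p1', p2', hα, hβ, hp1, hp2, hp1', hp2'⟩

theorem stmt15 (a b : Bool) (d e : List Bool) (hde : d.length = e.length)
    (α β w : List Bool) (hw : IsAlt w)
    (h1 : d ++ [b] = α ++ w ++ β) (h2 : [!a] ++ e = α ++ bcompl w ++ β)
    (hA : TypeA ([a] ++ d) (e ++ [!b])) :
    ∃ p1 p2 p1' p2' : List Bool,
      α = p1' ++ p2' ∧ β = p1 ++ p2 ∧
      PeriodLe p1 2 ∧ PeriodLe p2 2 ∧ PeriodLe p1' 2 ∧ PeriodLe p2' 2 :=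
  stmt15_general a b d e α β w h1 h2 hA
end
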